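/- Let 𝔤 be a finite-dimensional nilpotent real Lie algebra with a nondegenerate symmetric bilinear form g, let D be a derivation of 𝔤 with D + D* = 2a·id for some a ∈ ℝ (D* the g-adjoint), and let τ = ±1. If the metric g̃ = g + τe⁰⊗e⁰ on 𝔤 ⋊_D ℝe₀ is Einstein, then g is Ricci-flat. -/

import Mathlib

open LinearMap Module

noncomputable section

variable {V : Type} [AddCommGroup V] [Module ℝ V] [FiniteDimensional ℝ V]

/-- A Lie bracket on a real vector space, given as a bilinear map. -/
def IsLieBracket (br : V →ₗ[ℝ] V →ₗ[ℝ] V) : Prop :=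
  (∀ x y, br x y = - br y x) ∧
    ∀ x y z, br (br x y) z + br (br y z) x + br (br z x) y = 0

/-- Nilpotency of a Lie bracket: iterated adjoint maps of length `n` vanish. -/
def IsNilpotentBracket (br : V →ₗ[ℝ] V →ₗ[ℝ] V) : Prop :=
  ∃ n : ℕ, ∀ l : List V, l.length = n → ∀ x : V,
    l.foldr (fun v y => br v y) x = 0

/-- The derived series of a bracket. -/
def derivedSeriesB (br : V →ₗ[ℝ] V →ₗ[ℝ] V) : ℕ → Submodule ℝ V
  | 0 => ⊤
  | n + 1 => Submodule.span ℝ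
      {x | ∃ a ∈ derivedSeriesB br n, ∃ b ∈ derivedSeriesB br n, x = br a b}

/-- Solvability of a Lie bracket. -/
def IsSolvableBracket (br : V →ₗ[ℝ] V →ₗ[ℝ] V) : Prop :=
  ∃ n, derivedSeriesB br n = ⊥

/-- `D` is a derivation of the bracket `br`. -/
def IsDerivB (br : V →ₗ[ℝ] V →ₗ[ℝ] V) (D : V →ₗ[ℝ] V) : Prop :=
  ∀ x y, D (br x y) = br (D x) y + br x (D y)

/-- The musical isomorphism `♯` of a nondegenerate bilinear form. -/
def sharp (g : LinearMap.BilinForm ℝ V) (hg : g.Nondegenerate) :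
    Module.Dual ℝ V →ₗ[ℝ] V :=
  (LinearMap.BilinForm.toDual g hg).symm.toLinearMap

/-- The adjoint `f*` of an endomorphism with respect to `g` :
`g (f x) y = g x (f* y)` (for symmetric `g`). -/
def adjE (g : LinearMap.BilinForm ℝ V) (hg : g.Nondegenerate)
    (f : V →ₗ[ℝ] V) : V →ₗ[ℝ] V :=
  sharp g hg ∘ₗ ((LinearMap.llcomp ℝ V V ℝ).flip f ∘ₗ g.flip)

/-- The symmetric part `f^s = (f + f*)/2`. -/
def symPart (g : LinearMap.BilinForm ℝ V) (hg : g.Nondegenerate)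
    (f : V →ₗ[ℝ] V) : V →ₗ[ℝ] V := (2:ℝ)⁻¹ • (f + adjE g hg f)

/-- The skew-symmetric part `f^a = (f - f*)/2`. -/
def skewPart (g : LinearMap.BilinForm ℝ V) (hg : g.Nondegenerate)
    (f : V →ₗ[ℝ] V) : V →ₗ[ℝ] V := (2:ℝ)⁻¹ • (f - adjE g hg f)

/-- The endomorphism `A` associated to a bilinear form `β` by `g (A x) y = β x y`. -/
def endoOf (g : LinearMap.BilinForm ℝ V) (hg : g.Nondegenerate)
    (β : LinearMap.BilinForm ℝ V) : V →ₗ[ℝ] V := sharp g hg ∘ₗ β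

/-- The scalar product of two 1-forms: `g(α♯, β♯)`. -/
def inner1 (g : LinearMap.BilinForm ℝ V) (hg : g.Nondegenerate)
    (α β : Module.Dual ℝ V) : ℝ := g (sharp g hg α) (sharp g hg β)

/-- The scalar product of two endomorphisms: `Tr (f ∘ h*)`. -/
def innerEndo (g : LinearMap.BilinForm ℝ V) (hg : g.Nondegenerate)
    (f h : V →ₗ[ℝ] V) : ℝ := trace ℝ V (f ∘ₗ adjE g hg h)

/-- The scalar product of two 2-forms: `(1/2) Tr (A ∘ B*)`. -/
def inner2 (g : LinearMap.BilinForm ℝ V) (hg : g.Nondegenerate)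
    (α β : LinearMap.BilinForm ℝ V) : ℝ :=
  (2:ℝ)⁻¹ * trace ℝ V (endoOf g hg α ∘ₗ adjE g hg (endoOf g hg β))

/-- The 2-form `d(v♭) : (x, y) ↦ - g(v, [x,y])`. -/
def dflat (g : LinearMap.BilinForm ℝ V) (br : V →ₗ[ℝ] V →ₗ[ℝ] V)
    (v : V) : LinearMap.BilinForm ℝ V :=
  - ((LinearMap.llcomp ℝ V V ℝ (g v)) ∘ₗ br)

/-- The Ricci tensor of a metric Lie algebra:
`2 ric(v,w) = -Tr ad((v⌟dw♭ + w⌟dv♭)♯) + g(dv♭,dw♭) - g(ad v, ad w) - Tr(ad v ∘ ad w)`. -/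
def ricci (br : V →ₗ[ℝ] V →ₗ[ℝ] V) (g : LinearMap.BilinForm ℝ V)
    (hg : g.Nondegenerate) (v w : V) : ℝ :=
  (- trace ℝ V (br (sharp g hg (dflat g br w v + dflat g br v w)))
    + inner2 g hg (dflat g br v) (dflat g br w)
    - innerEndo g hg (br v) (br w)
    - trace ℝ V (br v ∘ₗ br w)) / 2

/-- A Sasaki structure `(φ, ξ, η, g)` on a Lie algebra with bracket `br`. -/
def IsSasaki (br : V →ₗ[ℝ] V →ₗ[ℝ] V) (g : LinearMap.BilinForm ℝ V)
    (φ : V →ₗ[ℝ] V) (ξ : V) (η : Module.Dual ℝ V) : Prop :=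
  η ξ = 1 ∧ (∀ x, η (φ x) = 0) ∧ (∀ x, φ (φ x) = - x + η x • ξ) ∧
    g ξ ξ = 1 ∧ (∀ x, η x = g ξ x) ∧
    (∀ x y, g (φ x) (φ y) = g x y - η x * η y) ∧
    (∀ x y, φ (φ (br x y)) + br (φ x) (φ y) - φ (br (φ x) y)
        - φ (br x (φ y)) - η (br x y) • ξ = 0) ∧
    (∀ x y, - η (br x y) = 2 * g x (φ y))

/-- A pseudo-Kähler structure `(g, J, ω)`, where `ω (x, y) = g (x, J y)`. -/
def IsPseudoKahler (br : V →ₗ[ℝ] V →ₗ[ℝ] V) (g : LinearMap.BilinForm ℝ V)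
    (J : V →ₗ[ℝ] V) : Prop :=
  (∀ x, J (J x) = - x) ∧ (∀ x y, g (J x) (J y) = g x y) ∧
    (∀ x y, br (J x) (J y) - J (br (J x) y) - J (br x (J y)) - br x y = 0) ∧
    (∀ x y z, g (br x y) (J z) + g (br y z) (J x) + g (br z x) (J y) = 0)


/-! In `𝔤 ⋊_D ℝe₀` every ingredient of the Ricci tensor splits into blocks with respect to
`𝔤 ⊕ ℝe₀`. Nilpotency gives `tr ad u = 0` on `𝔤`, and `D + D* = 2a·id` makes the contributions of
`D` collapse, so that `ric̃(e₀, e₀) = -a tr D` and `ric̃(v, w) = ric(v, w) - τ⁻¹ a tr D g(v, w)` for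
`v, w ∈ 𝔤`. The Einstein equation at `(e₀, e₀)` gives `λτ = -a tr D`, and then at `(v, w)` it
gives `ric(v, w) = (λ + τ⁻¹ a tr D) g(v, w) = 0`. -/

section Adjoint

variable {W : Type} [AddCommGroup W] [Module ℝ W] [FiniteDimensional ℝ W]
variable (g : LinearMap.BilinForm ℝ W) (hg : g.Nondegenerate)

theorem apply_sharp (α : Module.Dual ℝ W) (y : W) : g (sharp g hg α) y = α y :=
  LinearMap.BilinForm.apply_toDual_symm_apply α y

theorem sharp_eq_of_forall {α : Module.Dual ℝ W} {p : W} (h : ∀ y, g p y = α y) :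
    sharp g hg α = p :=
  eq_of_sub_eq_zero <| hg.1 _ fun y => by
    rw [map_sub, LinearMap.sub_apply, apply_sharp, h, sub_self]

theorem adjE_apply_right (hsym : ∀ x y, g x y = g y x) (f : W →ₗ[ℝ] W) (x y : W) :
    g x (adjE g hg f y) = g (f x) y := by
  rw [hsym, adjE, LinearMap.comp_apply, apply_sharp]
  rfl

theorem adjE_apply_left (hsym : ∀ x y, g x y = g y x) (f : W →ₗ[ℝ] W) (x y : W) :
    g (adjE g hg f x) y = g x (f y) := by
  rw [hsym, adjE_apply_right g hg hsym, hsym]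

theorem adjE_zero : adjE g hg 0 = 0 := by
  simp [adjE]

theorem adjE_eq_of_forall (hsym : ∀ x y, g x y = g y x) {f h : W →ₗ[ℝ] W}
    (H : ∀ x y, g (f x) y = g x (h y)) : adjE g hg f = h := by
  ext y
  refine eq_of_sub_eq_zero (hg.1 _ fun x => ?_)
  rw [map_sub, LinearMap.sub_apply, hsym, adjE_apply_right g hg hsym, H, hsym x, sub_self]

theorem adjE_endoOf_of_skew (hsym : ∀ x y, g x y = g y x) {β : LinearMap.BilinForm ℝ W}
    (hβ : ∀ x y, β x y = -β y x) : adjE g hg (endoOf g hg β) = -endoOf g hg β :=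
  adjE_eq_of_forall g hg hsym fun x y => by
    rw [LinearMap.neg_apply, map_neg, hsym x, endoOf, LinearMap.comp_apply,
      LinearMap.comp_apply, apply_sharp, apply_sharp, hβ]

theorem inner2_of_skew (hsym : ∀ x y, g x y = g y x) (α : LinearMap.BilinForm ℝ W)
    {β : LinearMap.BilinForm ℝ W} (hβ : ∀ x y, β x y = -β y x) :
    inner2 g hg α β = -(2⁻¹ * trace ℝ W (endoOf g hg α ∘ₗ endoOf g hg β)) := by
  rw [inner2, adjE_endoOf_of_skew g hg hsym hβ, LinearMap.comp_neg, map_neg, mul_neg]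

variable {g : LinearMap.BilinForm ℝ W} {hg : g.Nondegenerate} {D : W →ₗ[ℝ] W} {a : ℝ}

theorem adjE_apply_of_add_adjE (hDs : D + adjE g hg D = (2 * a) • LinearMap.id) (x : W) :
    adjE g hg D x = (2 * a) • x - D x := by
  rw [eq_sub_iff_add_eq', ← LinearMap.add_apply, hDs]
  simp

theorem apply_add_apply_of_add_adjE (hsym : ∀ x y, g x y = g y x)
    (hDs : D + adjE g hg D = (2 * a) • LinearMap.id) (x y : W) :
    g (D x) y + g x (D y) = 2 * a * g x y := by
  rw [hsym x, ← adjE_apply_right g hg hsym D y x, hsym (D x), ← map_add, ← LinearMap.add_apply, hDs,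
    hsym y]
  simp

theorem apply_adjE_adjE_of_add_adjE (hsym : ∀ x y, g x y = g y x)
    (hDs : D + adjE g hg D = (2 * a) • LinearMap.id) (x y : W) :
    g (adjE g hg D x) (adjE g hg D y) = g (D x) (D y) := by
  have h := apply_add_apply_of_add_adjE hsym hDs x y
  simp only [adjE_apply_of_add_adjE hDs, map_sub, map_smul, LinearMap.sub_apply,
    LinearMap.smul_apply, smul_eq_mul]
  linear_combination (-(2 * a)) * h

theorem trace_comp_adjE_add_trace_comp_self (hDs : D + adjE g hg D = (2 * a) • LinearMap.id) :
    trace ℝ W (D ∘ₗ adjE g hg D) + trace ℝ W (D ∘ₗ D) = 2 * a * trace ℝ W D := by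
  rw [← map_add, ← LinearMap.comp_add, add_comm, hDs, LinearMap.comp_smul, LinearMap.comp_id,
    map_smul, smul_eq_mul]

end Adjoint

theorem dflat_skew {W : Type} [AddCommGroup W] [Module ℝ W] (g : LinearMap.BilinForm ℝ W)
    {br : W →ₗ[ℝ] W →ₗ[ℝ] W} (hskew : ∀ x y, br x y = -br y x) (v x y : W) :
    dflat g br v x y = -dflat g br v y x := by
  simp only [dflat, LinearMap.neg_apply, LinearMap.comp_apply, llcomp_apply, hskew x y, map_neg,
    neg_neg]

section Block

variable {W : Type} [AddCommGroup W] [Module ℝ W]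

/-- The endomorphism of `W × ℝ` with block matrix `[[A, u], [φ, c]]`. -/
def blockEnd (A : W →ₗ[ℝ] W) (u : W) (φ : Module.Dual ℝ W) (c : ℝ) : W × ℝ →ₗ[ℝ] W × ℝ :=
  (A ∘ₗ fst ℝ W ℝ + toSpanSingleton ℝ W u ∘ₗ snd ℝ W ℝ).prod (φ ∘ₗ fst ℝ W ℝ + c • snd ℝ W ℝ)

@[simp]
theorem blockEnd_apply (A : W →ₗ[ℝ] W) (u : W) (φ : Module.Dual ℝ W) (c : ℝ) (p : W × ℝ) :
    blockEnd A u φ c p = (A p.1 + p.2 • u, φ p.1 + c * p.2) := by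
  simp [blockEnd]

theorem blockEnd_comp_blockEnd (A A' : W →ₗ[ℝ] W) (u u' : W) (φ φ' : Module.Dual ℝ W)
    (c c' : ℝ) :
    blockEnd A u φ c ∘ₗ blockEnd A' u' φ' c' =
      blockEnd (A ∘ₗ A' + φ'.smulRight u) (A u' + c' • u) (φ ∘ₗ A' + c • φ')
        (φ u' + c * c') := by
  ext p <;> simp [smul_add]

variable [FiniteDimensional ℝ W]

theorem trace_blockEnd (A : W →ₗ[ℝ] W) (u : W) (φ : Module.Dual ℝ W) (c : ℝ) :
    trace ℝ (W × ℝ) (blockEnd A u φ c) = trace ℝ W A + c := by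
  have hsplit : blockEnd A u φ c = A.prodMap (c • LinearMap.id)
      + inl ℝ W ℝ ∘ₗ (toSpanSingleton ℝ W u ∘ₗ snd ℝ W ℝ)
      + inr ℝ W ℝ ∘ₗ (φ ∘ₗ fst ℝ W ℝ) := by
    ext p <;> simp
  rw [hsplit, map_add, map_add, trace_prodMap', trace_comp_comm' _ (inl ℝ W ℝ),
    trace_comp_comm' _ (inr ℝ W ℝ), LinearMap.comp_assoc, LinearMap.comp_assoc]
  simp

theorem trace_blockEnd_comp_blockEnd (A A' : W →ₗ[ℝ] W) (u u' : W) (φ φ' : Module.Dual ℝ W)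
    (c c' : ℝ) :
    trace ℝ (W × ℝ) (blockEnd A u φ c ∘ₗ blockEnd A' u' φ' c') =
      trace ℝ W (A ∘ₗ A') + φ' u + (φ u' + c * c') := by
  rw [blockEnd_comp_blockEnd, trace_blockEnd, map_add, trace_smulRight]

end Block

theorem isNilpotent_of_isNilpotentBracket {W : Type} [AddCommGroup W] [Module ℝ W]
    {br : W →ₗ[ℝ] W →ₗ[ℝ] W} (hnil : IsNilpotentBracket br) (u : W) : IsNilpotent (br u) := by
  obtain ⟨n, hn⟩ := hnil
  have hpow : ∀ m x, (br u ^ m) x = (List.replicate m u).foldr (fun v y => br v y) x := by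
    intro m x
    induction m with
    | zero => rfl
    | succ m ih => rw [pow_succ', Module.End.mul_apply, ih]; rfl
  exact ⟨n, LinearMap.ext fun x => by rw [hpow, hn _ List.length_replicate]; rfl⟩

theorem trace_eq_zero_of_isNilpotentBracket {W : Type} [AddCommGroup W] [Module ℝ W]
    [FiniteDimensional ℝ W] {br : W →ₗ[ℝ] W →ₗ[ℝ] W} (hnil : IsNilpotentBracket br) (u : W) :
    trace ℝ W (br u) = 0 :=
  (isNilpotent_trace_of_isNilpotent (isNilpotent_of_isNilpotentBracket hnil u)).eq_zero

section Semidirect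

variable {W : Type} [AddCommGroup W] [Module ℝ W]

/-- The bracket of `𝔤 ⋊_D ℝe₀`, where `e₀ = (0, 1)`. -/
def semidirectBracket (br : W →ₗ[ℝ] W →ₗ[ℝ] W) (D : W →ₗ[ℝ] W) :
    (W × ℝ) →ₗ[ℝ] (W × ℝ) →ₗ[ℝ] (W × ℝ) :=
  LinearMap.mk₂ ℝ (fun p q => (br p.1 q.1 + p.2 • D q.1 - q.2 • D p.1, 0))
    (fun _ _ _ => by ext <;> simp [add_smul]; abel)
    (fun _ _ _ => by ext <;> simp [smul_sub, smul_smul, mul_comm])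
    (fun _ _ _ => by ext <;> simp [add_smul]; abel)
    (fun _ _ _ => by ext <;> simp [smul_sub, smul_smul, mul_comm])

/-- The metric `g + τ e⁰ ⊗ e⁰`. -/
def extendedForm (g : LinearMap.BilinForm ℝ W) (τ : ℝ) : LinearMap.BilinForm ℝ (W × ℝ) :=
  LinearMap.mk₂ ℝ (fun p q => g p.1 q.1 + τ * p.2 * q.2)
    (fun _ _ _ => by simp; ring) (fun _ _ _ => by simp; ring)
    (fun _ _ _ => by simp; ring) (fun _ _ _ => by simp; ring)

variable {br : W →ₗ[ℝ] W →ₗ[ℝ] W} {D : W →ₗ[ℝ] W} {g : LinearMap.BilinForm ℝ W} {τ a : ℝ}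

@[simp]
theorem semidirectBracket_apply (p q : W × ℝ) :
    semidirectBracket br D p q = (br p.1 q.1 + p.2 • D q.1 - q.2 • D p.1, 0) := rfl

@[simp]
theorem extendedForm_apply (p q : W × ℝ) :
    extendedForm g τ p q = g p.1 q.1 + τ * p.2 * q.2 := rfl

theorem extendedForm_comm (hsym : ∀ x y, g x y = g y x) (p q : W × ℝ) :
    extendedForm g τ p q = extendedForm g τ q p := by
  simp only [extendedForm_apply, hsym p.1]
  ring

theorem ne_zero_of_extendedForm_nondegenerate (hnd : (extendedForm g τ).Nondegenerate) :
    τ ≠ 0 := by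
  rintro rfl
  simpa using hnd.1 (0, 1) fun q => by simp

theorem semidirectBracket_eq_blockEnd (p : W × ℝ) :
    semidirectBracket br D p = blockEnd (br p.1 + p.2 • D) (-D p.1) 0 0 := by
  ext q <;> simp [sub_eq_add_neg]

theorem dflat_semidirectBracket_zero_one :
    dflat (extendedForm g τ) (semidirectBracket br D) (0, 1) = 0 :=
  LinearMap.ext₂ fun x y => by simp [dflat]

variable [FiniteDimensional ℝ W] (hg : g.Nondegenerate) (hnd : (extendedForm g τ).Nondegenerate)

theorem sharp_extendedForm (φ : Module.Dual ℝ (W × ℝ)) :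
    sharp (extendedForm g τ) hnd φ = (sharp g hg (φ ∘ₗ inl ℝ W ℝ), τ⁻¹ * φ (0, 1)) := by
  refine sharp_eq_of_forall _ _ fun y => ?_
  have hτ := ne_zero_of_extendedForm_nondegenerate hnd
  have hy : y = inl ℝ W ℝ y.1 + y.2 • (0, 1) := by ext <;> simp
  conv_rhs => rw [hy, map_add, map_smul]
  simp [apply_sharp]
  field_simp

theorem adjE_semidirectBracket (hsym : ∀ x y, g x y = g y x) (p : W × ℝ) :
    adjE (extendedForm g τ) hnd (semidirectBracket br D p) =
      blockEnd (adjE g hg (br p.1) + p.2 • adjE g hg D) 0 (-τ⁻¹ • g (D p.1)) 0 := by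
  refine adjE_eq_of_forall _ _ (extendedForm_comm hsym) fun x y => ?_
  have hτ := ne_zero_of_extendedForm_nondegenerate hnd
  simp only [semidirectBracket_apply, extendedForm_apply, blockEnd_apply, map_add, map_sub,
    map_smul, LinearMap.add_apply, LinearMap.sub_apply, LinearMap.smul_apply, smul_eq_mul,
    map_zero, adjE_apply_right g hg hsym]
  field_simp
  ring

theorem endoOf_dflat_semidirectBracket (hsym : ∀ x y, g x y = g y x) (p : W × ℝ) :
    endoOf (extendedForm g τ) hnd (dflat (extendedForm g τ) (semidirectBracket br D) p) =
      blockEnd (endoOf g hg (dflat g br p.1)) (-adjE g hg D p.1) (τ⁻¹ • g (adjE g hg D p.1)) 0 := by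
  refine LinearMap.ext fun x => ?_
  rw [endoOf, LinearMap.comp_apply, sharp_extendedForm hg, blockEnd_apply]
  congr 1
  · refine sharp_eq_of_forall _ _ fun y => ?_
    simp [endoOf, apply_sharp, dflat, adjE_apply_left g hg hsym]
    ring
  · simp [dflat, adjE_apply_left g hg hsym]

theorem trace_semidirectBracket (p : W × ℝ) :
    trace ℝ (W × ℝ) (semidirectBracket br D p) = trace ℝ W (br p.1) + p.2 * trace ℝ W D := by
  rw [semidirectBracket_eq_blockEnd, trace_blockEnd, map_add, map_smul, smul_eq_mul, add_zero]

theorem trace_semidirectBracket_inl_comp_inl (v w : W) :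
    trace ℝ (W × ℝ) (semidirectBracket br D (v, 0) ∘ₗ semidirectBracket br D (w, 0)) =
      trace ℝ W (br v ∘ₗ br w) := by
  simp [semidirectBracket_eq_blockEnd, trace_blockEnd_comp_blockEnd]

theorem innerEndo_semidirectBracket_inl (hsym : ∀ x y, g x y = g y x) (v w : W) :
    innerEndo (extendedForm g τ) hnd (semidirectBracket br D (v, 0))
        (semidirectBracket br D (w, 0)) =
      innerEndo g hg (br v) (br w) + τ⁻¹ * g (D v) (D w) := by
  rw [innerEndo, innerEndo, adjE_semidirectBracket hg hnd hsym, semidirectBracket_eq_blockEnd,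
    trace_blockEnd_comp_blockEnd]
  simp [hsym (D w)]

theorem inner2_dflat_semidirectBracket_inl (hskew : ∀ x y, br x y = -br y x)
    (hsym : ∀ x y, g x y = g y x) (hDs : D + adjE g hg D = (2 * a) • LinearMap.id) (v w : W) :
    inner2 (extendedForm g τ) hnd (dflat (extendedForm g τ) (semidirectBracket br D) (v, 0))
        (dflat (extendedForm g τ) (semidirectBracket br D) (w, 0)) =
      inner2 g hg (dflat g br v) (dflat g br w) + τ⁻¹ * g (D v) (D w) := by
  have hskewT : ∀ p q, semidirectBracket br D p q = -semidirectBracket br D q p := by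
    intro p q
    ext <;> simp [hskew p.1]
    abel
  rw [inner2_of_skew _ _ (extendedForm_comm hsym) _ (dflat_skew _ hskewT _),
    inner2_of_skew _ _ hsym _ (dflat_skew _ hskew _), endoOf_dflat_semidirectBracket hg hnd hsym,
    endoOf_dflat_semidirectBracket hg hnd hsym, trace_blockEnd_comp_blockEnd]
  simp only [LinearMap.smul_apply, map_neg, smul_eq_mul, hsym (adjE g hg D w),
    apply_adjE_adjE_of_add_adjE hsym hDs]
  ring

theorem ricci_semidirectBracket_zero_one (hsym : ∀ x y, g x y = g y x)
    (hDs : D + adjE g hg D = (2 * a) • LinearMap.id) :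
    ricci (semidirectBracket br D) (extendedForm g τ) hnd (0, 1) (0, 1) = -(a * trace ℝ W D) := by
  have hadj : adjE (extendedForm g τ) hnd (semidirectBracket br D (0, 1)) =
      blockEnd (adjE g hg D) 0 0 0 := by
    simp [adjE_semidirectBracket hg hnd hsym, adjE_zero]
  have had : semidirectBracket br D (0, 1) = blockEnd D 0 0 0 := by
    simp [semidirectBracket_eq_blockEnd]
  rw [ricci, innerEndo, dflat_semidirectBracket_zero_one, hadj, had,
    trace_blockEnd_comp_blockEnd, trace_blockEnd_comp_blockEnd]
  simp [inner2, endoOf]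
  linarith [trace_comp_adjE_add_trace_comp_self hDs]

theorem ricci_semidirectBracket_inl (hskew : ∀ x y, br x y = -br y x)
    (htr : ∀ u, trace ℝ W (br u) = 0) (hsym : ∀ x y, g x y = g y x)
    (hDs : D + adjE g hg D = (2 * a) • LinearMap.id) (v w : W) :
    ricci (semidirectBracket br D) (extendedForm g τ) hnd (v, 0) (w, 0) =
      ricci br g hg v w - τ⁻¹ * a * trace ℝ W D * g v w := by
  set ψ := dflat (extendedForm g τ) (semidirectBracket br D) (w, 0) (v, 0) +
    dflat (extendedForm g τ) (semidirectBracket br D) (v, 0) (w, 0)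
  have hψ : ψ ∘ₗ inl ℝ W ℝ = dflat g br w v + dflat g br v w := by
    ext y
    simp [ψ, dflat]
  have hψ_e₀ : ψ (0, 1) = 2 * a * g v w := by
    simp [ψ, dflat, hsym w (D v), apply_add_apply_of_add_adjE hsym hDs]
  rw [ricci, ricci, sharp_extendedForm hg, hψ, hψ_e₀, trace_semidirectBracket, htr,
    inner2_dflat_semidirectBracket_inl hg hnd hskew hsym hDs,
    innerEndo_semidirectBracket_inl hg hnd hsym, trace_semidirectBracket_inl_comp_inl]
  ring

end Semidirect

theorem ricci_flat_of_einstein_extension_deriv_sym_smul_id_general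
    {V : Type} [AddCommGroup V] [Module ℝ V] [FiniteDimensional ℝ V]
    (br : V →ₗ[ℝ] V →ₗ[ℝ] V) (hbr : IsLieBracket br)
    (hnil : IsNilpotentBracket br)
    (g : LinearMap.BilinForm ℝ V) (hsym : ∀ x y, g x y = g y x)
    (hg : g.Nondegenerate)
    (D : V →ₗ[ℝ] V)
    (a : ℝ)
    (hDs : D + adjE g hg D = (2 * a) • (LinearMap.id : V →ₗ[ℝ] V))
    (τ : ℝ)
    (brT : (V × ℝ) →ₗ[ℝ] (V × ℝ) →ₗ[ℝ] (V × ℝ))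
    (hbrT : ∀ p q : V × ℝ,
      brT p q = (br p.1 q.1 + p.2 • D q.1 - q.2 • D p.1, 0))
    (gT : LinearMap.BilinForm ℝ (V × ℝ))
    (hgT : ∀ p q : V × ℝ, gT p q = g p.1 q.1 + τ * p.2 * q.2)
    (hgTnd : gT.Nondegenerate)
    (hEinstein : ∃ lam : ℝ, ∀ p q, ricci brT gT hgTnd p q = lam * gT p q) :
    ∀ v w : V, ricci br g hg v w = 0 := by
  obtain rfl : brT = semidirectBracket br D := LinearMap.ext₂ hbrT
  obtain rfl : gT = extendedForm g τ := LinearMap.ext₂ hgT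
  obtain ⟨lam, hE⟩ := hEinstein
  intro v w
  have hτ := ne_zero_of_extendedForm_nondegenerate hgTnd
  have he₀ := hE (0, 1) (0, 1)
  have hvw := hE (v, 0) (w, 0)
  rw [ricci_semidirectBracket_zero_one hg hgTnd hsym hDs, extendedForm_apply] at he₀
  rw [ricci_semidirectBracket_inl hg hgTnd hbr.1 (trace_eq_zero_of_isNilpotentBracket hnil) hsym
    hDs, extendedForm_apply] at hvw
  simp only [map_zero, mul_zero, add_zero, zero_add, mul_one] at he₀ hvw
  linear_combination hvw - τ⁻¹ * g v w * he₀ - lam * g v w * inv_mul_cancel₀ hτ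

/-- if a standard extension by a derivation with `D^s = a·id` is
Einstein, then the nilpotent Lie algebra is Ricci-flat. -/
theorem ricci_flat_of_einstein_extension_deriv_sym_smul_id
    {V : Type} [AddCommGroup V] [Module ℝ V] [FiniteDimensional ℝ V]
    (br : V →ₗ[ℝ] V →ₗ[ℝ] V) (hbr : IsLieBracket br)
    (hnil : IsNilpotentBracket br)
    (g : LinearMap.BilinForm ℝ V) (hsym : ∀ x y, g x y = g y x)
    (hg : g.Nondegenerate)
    (D : V →ₗ[ℝ] V) (hD : IsDerivB br D)
    (a : ℝ)
    (hDs : D + adjE g hg D = (2 * a) • (LinearMap.id : V →ₗ[ℝ] V))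
    (τ : ℝ) (hτ : τ = 1 ∨ τ = -1)
    (brT : (V × ℝ) →ₗ[ℝ] (V × ℝ) →ₗ[ℝ] (V × ℝ))
    (hbrT : ∀ p q : V × ℝ,
      brT p q = (br p.1 q.1 + p.2 • D q.1 - q.2 • D p.1, 0))
    (gT : LinearMap.BilinForm ℝ (V × ℝ))
    (hgT : ∀ p q : V × ℝ, gT p q = g p.1 q.1 + τ * p.2 * q.2)
    (hgTnd : gT.Nondegenerate)
    (hEinstein : ∃ lam : ℝ, ∀ p q, ricci brT gT hgTnd p q = lam * gT p q) :
    ∀ v w : V, ricci br g hg v w = 0 :=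
  ricci_flat_of_einstein_extension_deriv_sym_smul_id_general br hbr hnil g hsym hg D a hDs τ brT
    hbrT gT hgT hgTnd hEinstein
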